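/- Let (G, Δ, R) be a strict quasitriangular 2-bialgebra with 2-R-matrix components satisfying the coproduct permutation identities Rʳ·Δ₀ʳ(x) = (σ∘Δ₀ˡ(x))·Rʳ and Rˡ·Δ₀ˡ(x) = (σ∘Δ₀ʳ(x))·Rˡ for all x ∈ G₀. Then the induced degree-0 element R = (t⊗id)Rˡ = (id⊗t)Rʳ ∈ G₀⊗G₀ intertwines the degree-0 coproduct with its opposite: R·Δ₀'(x) = (σ∘Δ₀'(x))·R for all x ∈ G₀, where σ is the flip of tensor factors on G₀⊗G₀. -/

import Mathlib

/-! Apply `id ⊗ t` to `Rʳ·Δ₀ʳ(x) = σ(Δ₀ˡ(x))·Rʳ`. Since `t` is multiplicative, `id ⊗ t` respects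
factorwise products and commutes with the flip up to swapping to `t ⊗ id`, and the coPeiffer
identity turns `(id ⊗ t)Δ₀ʳ(x)` into `Δ₀'(x)`. -/

open scoped TensorProduct

structure AssocTwoAlgebra (k : Type*) [CommRing k] (G₀ G₁ : Type*)
    [NonUnitalRing G₀] [NonUnitalRing G₁] [Module k G₀] [Module k G₁] where
  t : G₁ →ₗ[k] G₀
  t_mul : ∀ y y' : G₁, t (y * y') = t y * t y'
  actL : G₀ →ₗ[k] G₁ →ₗ[k] G₁
  actR : G₁ →ₗ[k] G₀ →ₗ[k] G₁
  actL_mul : ∀ (x x' : G₀) (y : G₁), actL (x * x') y = actL x (actL x' y)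
  actLR : ∀ (x : G₀) (y : G₁) (x' : G₀), actR (actL x y) x' = actL x (actR y x')
  actR_mul : ∀ (y : G₁) (x x' : G₀), actR y (x * x') = actR (actR y x) x'
  equivL : ∀ (x : G₀) (y : G₁), t (actL x y) = x * t y
  equivR : ∀ (y : G₁) (x : G₀), t (actR y x) = t y * x
  peifferL : ∀ y y' : G₁, actL (t y) y' = y * y'
  peifferR : ∀ y y' : G₁, actR y (t y') = y * y'

noncomputable section

namespace TensorProduct

variable {R A B C D : Type*} [CommSemiring R]
  [NonUnitalNonAssocSemiring A] [NonUnitalNonAssocSemiring B]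
  [NonUnitalNonAssocSemiring C] [NonUnitalNonAssocSemiring D]
  [Module R A] [Module R B] [Module R C] [Module R D]
  [SMulCommClass R A A] [IsScalarTower R A A] [SMulCommClass R B B] [IsScalarTower R B B]
  [SMulCommClass R C C] [IsScalarTower R C C] [SMulCommClass R D D] [IsScalarTower R D D]

theorem map_map₂_mul {f : A →ₗ[R] C} {g : B →ₗ[R] D}
    (hf : ∀ a a', f (a * a') = f a * f a') (hg : ∀ b b', g (b * b') = g b * g b')
    (u v : A ⊗[R] B) :
    map f g (map₂ (LinearMap.mul R A) (LinearMap.mul R B) u v)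
      = map₂ (LinearMap.mul R C) (LinearMap.mul R D) (map f g u) (map f g v) := by
  induction u using TensorProduct.induction_on with
  | zero => simp
  | add u u' hu hu' => simp only [map_add, LinearMap.add_apply, hu, hu']
  | tmul a b =>
    induction v using TensorProduct.induction_on with
    | zero => simp
    | add v v' hv hv' => simp only [map_add, hv, hv']
    | tmul a' b' => simp [map₂_apply_tmul, hf, hg]

end TensorProduct

theorem deg0_R_intertwines {k G₀ G₁ : Type*} [CommRing k]
    [NonUnitalRing G₀] [NonUnitalRing G₁] [Module k G₀] [Module k G₁]
    [SMulCommClass k G₀ G₀] [IsScalarTower k G₀ G₀]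
    [SMulCommClass k G₁ G₁] [IsScalarTower k G₁ G₁]
    (A : AssocTwoAlgebra k G₀ G₁)
    (Δl : G₀ →ₗ[k] G₁ ⊗[k] G₀) (Δr : G₀ →ₗ[k] G₀ ⊗[k] G₁)
    -- coPeiffer identity
    (hco : TensorProduct.map A.t LinearMap.id ∘ₗ Δl
            = TensorProduct.map LinearMap.id A.t ∘ₗ Δr)
    (Rr : G₀ ⊗[k] G₁)
    -- coproduct permutation identities (products factorwise)
    (hperm1 : ∀ x : G₀,
      TensorProduct.map₂ (LinearMap.mul k G₀) (LinearMap.mul k G₁) Rr (Δr x)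
        = TensorProduct.map₂ (LinearMap.mul k G₀) (LinearMap.mul k G₁)
            ((TensorProduct.comm k G₁ G₀) (Δl x)) Rr) :
    ∀ x : G₀,
      TensorProduct.map₂ (LinearMap.mul k G₀) (LinearMap.mul k G₀)
          (TensorProduct.map LinearMap.id A.t Rr)
          (TensorProduct.map A.t LinearMap.id (Δl x))
        = TensorProduct.map₂ (LinearMap.mul k G₀) (LinearMap.mul k G₀)
            ((TensorProduct.comm k G₀ G₀)
              (TensorProduct.map A.t LinearMap.id (Δl x)))
            (TensorProduct.map LinearMap.id A.t Rr) := by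
  intro x
  have hmul := TensorProduct.map_map₂_mul (f := (LinearMap.id : G₀ →ₗ[k] G₀))
    (fun _ _ => rfl) A.t_mul
  have hcoPeiffer : TensorProduct.map LinearMap.id A.t (Δr x)
      = TensorProduct.map A.t LinearMap.id (Δl x) :=
    (LinearMap.congr_fun hco x).symm
  have h := congrArg (TensorProduct.map LinearMap.id A.t) (hperm1 x)
  rwa [hmul, hmul, hcoPeiffer, TensorProduct.map_comm] at h

end
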